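/- arXiv:1911.12479 — 3 statements merged into one kernel-verified Lean document; each statement's English description precedes it below -/
import Mathlib

section
/- Fix n ≥ 0, non-negative integers a_1,…,a_n, v = (v_0,…,v_n) ∈ ℤ^{n+1}, a partition λ with |λ| = |v|, and m ∈ {0,1,…,n+1}. If −v_0 ≤ a_1+⋯+a_n, then there exists a polynomial P with coefficients in ℚ(q), of degree at most a_1+⋯+a_n+v_0, such that D_{v,λ}((a_0,a_1,…,a_n), m) = P(q^{a_0}) for every non-negative integer a_0. If −v_0 > a_1+⋯+a_n, then D_{v,λ}((a_0,a_1,…,a_n), m) = 0 for every non-negative integer a_0. -/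
/- Laurent polynomials in `N` variables `x_0, …, x_{N-1}` over `K = ℚ(q)`,
constant-term extraction, the q-Dyson product, the symmetric-function data and
the constant term `D_{v,λ}(a,m)` from the paper. -/

noncomputable section

/-- The field `K = ℚ(q)`. -/
abbrev KK : Type := RatFunc ℚ

/-- The indeterminate `q ∈ ℚ(q)`. -/
def qq : KK := RatFunc.X

/-- Laurent polynomials in `x_0, …, x_{N-1}` over `K`. -/
abbrev LL (N : ℕ) : Type := AddMonoidAlgebra KK (Fin N →₀ ℤ)

/-- Constant (scalar) Laurent polynomial. -/
def CK {N : ℕ} (c : KK) : LL N := AddMonoidAlgebra.single 0 c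

/-- The Laurent monomial `x_i^e`. -/
def Xm {N : ℕ} (i : Fin N) (e : ℤ) : LL N := AddMonoidAlgebra.single (Finsupp.single i e) 1

/-- Constant term: the coefficient of `x_0^0 ⋯ x_{N-1}^0`. -/
def CT {N : ℕ} (f : LL N) : KK := f.coeff 0

/-- The complete homogeneous symmetric polynomial `h_r` evaluated at the
(finitely indexed) alphabet `y`. -/
def hsym {N : ℕ} {ι : Type} [Fintype ι] [DecidableEq ι] (y : ι → LL N) (r : ℕ) : LL N :=
  ∑ c ∈ Finset.piAntidiag (Finset.univ : Finset ι) r, ∏ i, y i ^ (c i)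

/-- The alphabet `x_m^{(a)}`, consisting of the `|a|` Laurent monomials
`x_i q^{j - χ(i<m)}` for `0 ≤ i ≤ N-1`, `0 ≤ j ≤ a_i - 1`. -/
def alphabetX {N : ℕ} (a : Fin N → ℕ) (m : ℕ) : ((i : Fin N) × Fin (a i)) → LL N :=
  fun p => Xm p.1 1 * CK (qq ^ ((p.2 : ℤ) - (if (p.1 : ℕ) < m then 1 else 0)))

/-- `h_λ(x_m^{(a)}) = h_{λ_0} h_{λ_1} ⋯` where `λ` is given as the list of its parts. -/
def hPart {N : ℕ} (a : Fin N → ℕ) (m : ℕ) (lam : List ℕ) : LL N :=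
  (lam.map (fun r => hsym (alphabetX a m) r)).prod

/-- The q-shifted factorial `(z; q)_k` for a Laurent polynomial `z`. -/
def qPochL {N : ℕ} (z : LL N) (k : ℕ) : LL N :=
  ∏ i ∈ Finset.range k, (1 - z * CK (qq ^ i))

/-- The q-Dyson product `∏_{0 ≤ i < j ≤ N-1} (x_i/x_j; q)_{a_i} (q x_j/x_i; q)_{a_j}`. -/
def dysonProd {N : ℕ} (a : Fin N → ℕ) : LL N :=
  ∏ p ∈ Finset.univ.filter (fun p : Fin N × Fin N => p.1 < p.2),
    (qPochL (Xm p.1 1 * Xm p.2 (-1)) (a p.1) * qPochL (CK qq * Xm p.2 1 * Xm p.1 (-1)) (a p.2))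

/-- The constant term `D_{v,λ}(a,m)`, with `λ` given as the list of its parts. -/
def Dterm (N : ℕ) (v : Fin N → ℤ) (lam : List ℕ) (a : Fin N → ℕ) (m : ℕ) : KK :=
  CT ((∏ i, Xm i (-(v i))) * hPart a m lam * dysonProd a)

/-- The q-shifted factorial `(z; q)_k` in `K`. -/
def qPochK (z : KK) (k : ℕ) : KK := ∏ i ∈ Finset.range k, (1 - z * qq ^ i)

/-- The q-binomial coefficient `[N choose k]_q = (q^{N-k+1};q)_k / (q;q)_k`
(equal to `0` for `k < 0`). -/
def qBinom (nn : ℤ) (k : ℤ) : KK :=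
  if k < 0 then 0 else qPochK (qq ^ (nn - k + 1)) k.toNat / qPochK qq k.toNat

/-- `v⁺`: the weakly decreasing rearrangement of `v`, as a list. -/
def vplusL {N : ℕ} (v : Fin N → ℕ) : List ℕ :=
  (Multiset.sort (Multiset.map v Finset.univ.val) (· ≤ ·)).reverse

/-- `v⁺` for integer vectors `v`. -/
def vplusLZ {N : ℕ} (v : Fin N → ℤ) : List ℤ :=
  (Multiset.sort (Multiset.map v Finset.univ.val) (· ≤ ·)).reverse

/-!
Write the q-Dyson product for `a = (a_0, t)` as `∏_{j>0} (x_0/x_j; q)_{a_0}` times the product for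
`(0, t)`. The second factor, like `x^{-v}`, does not involve `a_0`, and `x_0` occurs in it with
exponent at least `-|t|`. By the `q`-binomial theorem, and by Pascal's rule for
`h_s(1, q, …, q^(a_0-1)) = [a_0+s-1 choose s]_q`, the coefficient of each `x^μ` in
`h_λ(x_m^{(a)}) ∏_{j>0} (x_0/x_j; q)_{a_0}` is a polynomial in `q^{a_0}` of degree at most
`μ_0`, and only monomials with `μ_0 ≥ 0` occur. Pairing them with the monomials of the fixed
factor, whose `x_0`-exponents are at least `-v_0 - |t|`, writes the constant term as a finite sum
of such polynomials of degree at most `|t| + v_0`; the sum is empty when `|t| + v_0 < 0`.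
-/

namespace QDyson

open Finset Polynomial

lemma qq_ne_zero : qq ≠ 0 := RatFunc.X_ne_zero

lemma qq_pow_ne_one {k : ℕ} (hk : k ≠ 0) : qq ^ k ≠ 1 := by
  intro h
  have h' : algebraMap ℚ[X] KK (X ^ k) = algebraMap ℚ[X] KK 1 := by
    simpa [qq, RatFunc.algebraMap_X] using h
  simpa [hk] using congrArg natDegree (RatFunc.algebraMap_injective ℚ h')

lemma qPochK_qq_ne_zero (k : ℕ) : qPochK qq k ≠ 0 :=
  prod_ne_zero_iff.mpr fun i _ => by
    rw [← pow_succ']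
    exact sub_ne_zero.mpr (qq_pow_ne_one i.succ_ne_zero).symm

section LaurentPolynomial

variable {N : ℕ}

lemma CK_zero : (CK 0 : LL N) = 0 := by
  simp [CK]

lemma CK_one : (CK 1 : LL N) = 1 := rfl

lemma CK_mul (a b : KK) : (CK (a * b) : LL N) = CK a * CK b := by
  simp [CK, AddMonoidAlgebra.single_mul_single]

lemma CK_sub (a b : KK) : (CK (a - b) : LL N) = CK a - CK b := by
  simp [CK, AddMonoidAlgebra.single_sub]

lemma CK_mul_single (c : KK) (ν : Fin N →₀ ℤ) (b : KK) :
    CK c * AddMonoidAlgebra.single ν b = AddMonoidAlgebra.single ν (c * b) := by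
  rw [CK, AddMonoidAlgebra.single_mul_single, zero_add]

lemma Xm_mul_Xm (i j : Fin N) (e f : ℤ) :
    (Xm i e * Xm j f : LL N)
      = AddMonoidAlgebra.single (Finsupp.single i e + Finsupp.single j f) 1 := by
  rw [Xm, Xm, AddMonoidAlgebra.single_mul_single, one_mul]

lemma coeff_one (μ : Fin N →₀ ℤ) : (1 : LL N).coeff μ = if μ = 0 then 1 else 0 := by
  rw [AddMonoidAlgebra.one_def, AddMonoidAlgebra.coeff_single, Finsupp.single_apply]
  simp [eq_comm]

lemma coeff_mul_eq_sum_support (f g : LL N) (μ : Fin N →₀ ℤ) :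
    (f * g).coeff μ = ∑ ν ∈ f.coeff.support, f.coeff ν * g.coeff (μ - ν) := by
  conv_lhs => rw [← AddMonoidAlgebra.sum_coeff_single f]
  rw [Finsupp.sum, Finset.sum_mul, AddMonoidAlgebra.coeff_sum, Finsupp.finsetSum_apply]
  refine sum_congr rfl fun ν _ => ?_
  rw [AddMonoidAlgebra.coeff_single_mul_apply, neg_add_eq_sub]

lemma coeff_mul_eq_sum_of_subset (f g : LL N) (μ : Fin N →₀ ℤ)
    (T : Finset (Fin N →₀ ℤ))
    (hT : ∀ ν, f.coeff ν ≠ 0 → g.coeff (μ - ν) ≠ 0 → ν ∈ T) :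
    (f * g).coeff μ = ∑ ν ∈ T, f.coeff ν * g.coeff (μ - ν) := by
  classical
  rw [coeff_mul_eq_sum_support]
  rw [sum_subset (subset_union_left (s₂ := T))
    (fun ν _ hν => by simp [Finsupp.notMem_support_iff.mp hν])]
  refine (sum_subset subset_union_right fun ν _ hν => ?_).symm
  by_contra h
  obtain ⟨h1, h2⟩ := mul_ne_zero_iff.mp h
  exact hν (hT ν h1 h2)

end LaurentPolynomial

section LowerExpBound

variable {N : ℕ} {i : Fin N}

def LowerExpBound (i : Fin N) (d : ℤ) (f : LL N) : Prop :=
  ∀ ν ∈ f.coeff.support, d ≤ ν i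

lemma LowerExpBound.mono {d e : ℤ} {f : LL N} (h : LowerExpBound i d f) (hed : e ≤ d) :
    LowerExpBound i e f :=
  fun ν hν => hed.trans (h ν hν)

lemma lowerExpBound_single {d : ℤ} {μ : Fin N →₀ ℤ} (c : KK) (h : d ≤ μ i) :
    LowerExpBound i d (AddMonoidAlgebra.single μ c) := by
  intro ν hν
  rw [Finset.mem_singleton.mp (Finsupp.support_single_subset hν)]
  exact h

lemma lowerExpBound_CK (c : KK) : LowerExpBound i 0 (CK c : LL N) :=
  lowerExpBound_single c le_rfl

lemma lowerExpBound_one : LowerExpBound i 0 (1 : LL N) :=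
  lowerExpBound_CK 1

lemma LowerExpBound.mul {d e : ℤ} {f g : LL N} (hf : LowerExpBound i d f)
    (hg : LowerExpBound i e g) : LowerExpBound i (d + e) (f * g) := by
  classical
  intro ν hν
  obtain ⟨α, hα, β, hβ, rfl⟩ :=
    mem_add.mp (AddMonoidAlgebra.support_coeff_mul_subset f g hν)
  simpa using add_le_add (hf α hα) (hg β hβ)

lemma LowerExpBound.sub {d : ℤ} {f g : LL N} (hf : LowerExpBound i d f)
    (hg : LowerExpBound i d g) : LowerExpBound i d (f - g) := by
  classical
  intro ν hν
  rw [sub_eq_add_neg, AddMonoidAlgebra.coeff_add, AddMonoidAlgebra.coeff_neg] at hν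
  rcases mem_union.mp (Finsupp.support_add hν) with h | h
  · exact hf ν h
  · exact hg ν (by rwa [Finsupp.support_neg] at h)

lemma lowerExpBound_prod {ι : Type*} (s : Finset ι) (f : ι → LL N) (d : ι → ℤ)
    (h : ∀ k ∈ s, LowerExpBound i (d k) (f k)) :
    LowerExpBound i (∑ k ∈ s, d k) (∏ k ∈ s, f k) := by
  classical
  induction s using Finset.induction with
  | empty => simpa using lowerExpBound_one
  | insert x s hx ih =>
    rw [prod_insert hx, sum_insert hx]
    exact (h x (mem_insert_self x s)).mul (ih fun k hk => h k (mem_insert_of_mem hk))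

lemma LowerExpBound.CT_eq_zero {d : ℤ} {f : LL N} (hf : LowerExpBound i d f) (hd : 0 < d) :
    CT f = 0 := by
  by_contra h
  have := hf 0 (Finsupp.mem_support_iff.mpr h)
  simp only [Finsupp.coe_zero, Pi.zero_apply] at this
  omega

lemma lowerExpBound_qPochL {d : ℤ} {z : LL N} (hz : LowerExpBound i d z) (hd : d ≤ 0)
    (k : ℕ) :
    LowerExpBound i (k * d) (qPochL z k) := by
  have := lowerExpBound_prod (range k) (fun j => 1 - z * CK (qq ^ j)) (fun _ => d)
    fun j _ => (lowerExpBound_one.mono hd).sub (by simpa using hz.mul (lowerExpBound_CK _))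
  simpa [qPochL, mul_comm] using this

end LowerExpBound

section QPolyFamily

variable {N : ℕ}

/-- The exponent condition confines the terms contributing to a coefficient of a product of two
such families to a finite box that does not depend on `a`. -/
structure IsQPolyFamily (W : ℕ → LL (N + 1)) : Prop where
  neg_exp_zero_le : ∀ a, ∀ ν ∈ (W a).coeff.support, ∀ j, -ν 0 ≤ ν j
  exists_poly : ∀ μ, ∃ Q : KK[X], Q.natDegree ≤ (μ 0).toNat ∧
    ∀ a, (W a).coeff μ = Q.eval (qq ^ a)

lemma IsQPolyFamily.exp_zero_nonneg {W : ℕ → LL (N + 1)} (hW : IsQPolyFamily W) {a : ℕ}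
    {ν : Fin (N + 1) →₀ ℤ} (hν : ν ∈ (W a).coeff.support) : 0 ≤ ν 0 := by
  have := hW.neg_exp_zero_le a ν hν 0
  omega

lemma IsQPolyFamily.mk' {W : ℕ → LL (N + 1)}
    (hexp : ∀ a, ∀ ν ∈ (W a).coeff.support, ∀ j, -ν 0 ≤ ν j)
    (hpoly : ∀ μ, 0 ≤ μ 0 → ∃ Q : KK[X], Q.natDegree ≤ (μ 0).toNat ∧
      ∀ a, (W a).coeff μ = Q.eval (qq ^ a)) : IsQPolyFamily W where
  neg_exp_zero_le := hexp
  exists_poly μ := by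
    by_cases hμ : 0 ≤ μ 0
    · exact hpoly μ hμ
    refine ⟨0, by simp, fun a => ?_⟩
    by_contra h
    have := hexp a μ (Finsupp.mem_support_iff.mpr (by simpa using h)) 0
    omega

lemma isQPolyFamily_const_one : IsQPolyFamily (fun _ => (1 : LL (N + 1))) := by
  classical
  refine .mk' (fun a ν hν j => ?_) fun μ _ => ⟨if μ = 0 then 1 else 0, ?_, fun a => ?_⟩
  · rw [Finset.mem_singleton.mp (Finsupp.support_single_subset hν)]
    simp
  · split_ifs <;> simp
  · rw [coeff_one]
    split_ifs <;> simp

lemma IsQPolyFamily.mul {W V : ℕ → LL (N + 1)} (hW : IsQPolyFamily W) (hV : IsQPolyFamily V) :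
    IsQPolyFamily (fun a => W a * V a) := by
  classical
  constructor
  · intro a ν hν j
    obtain ⟨α, hα, β, hβ, rfl⟩ :=
      mem_add.mp (AddMonoidAlgebra.support_coeff_mul_subset _ _ hν)
    have := add_le_add (hW.neg_exp_zero_le a α hα j) (hV.neg_exp_zero_le a β hβ j)
    simp only [Finsupp.add_apply]
    omega
  · intro μ
    choose QW hQW_deg hQW using hW.exists_poly
    choose QV hQV_deg hQV using hV.exists_poly
    let box : Finset (Fin (N + 1) →₀ ℤ) :=
      (Icc (Finsupp.equivFunOnFinite.symm fun _ => -μ 0)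
        (μ + Finsupp.equivFunOnFinite.symm fun _ => μ 0)).filter
        fun ν => 0 ≤ ν 0 ∧ ν 0 ≤ μ 0
    have hbox : ∀ a ν, (W a).coeff ν ≠ 0 → (V a).coeff (μ - ν) ≠ 0 → ν ∈ box := by
      intro a ν hν hν'
      have hW' := hW.neg_exp_zero_le a ν (Finsupp.mem_support_iff.mpr hν)
      have hV' := hV.neg_exp_zero_le a _ (Finsupp.mem_support_iff.mpr hν')
      have h0 := hW' 0
      have h0' := hV' 0
      simp only [Finsupp.sub_apply] at hV' h0'
      simp only [box, mem_filter, mem_Icc, Finsupp.le_def, Finsupp.add_apply,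
        Finsupp.coe_equivFunOnFinite_symm]
      refine ⟨⟨fun j => ?_, fun j => ?_⟩, by omega, by omega⟩
      · have := hW' j
        omega
      · have := hV' j
        omega
    refine ⟨∑ ν ∈ box, QW ν * QV (μ - ν), ?_, fun a => ?_⟩
    · refine natDegree_sum_le_of_forall_le _ _ fun ν hν => ?_
      obtain ⟨-, hν0, hνμ⟩ := mem_filter.mp hν
      refine natDegree_mul_le.trans ((add_le_add (hQW_deg ν) (hQV_deg _)).trans ?_)
      simp only [Finsupp.sub_apply]
      omega
    · rw [coeff_mul_eq_sum_of_subset _ _ μ box (hbox a), eval_finsetSum]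
      exact sum_congr rfl fun ν _ => by rw [eval_mul, hQW, hQV]

lemma isQPolyFamily_prod {ι : Type*} (s : Finset ι) (W : ι → ℕ → LL (N + 1))
    (h : ∀ k ∈ s, IsQPolyFamily (W k)) : IsQPolyFamily (fun a => ∏ k ∈ s, W k a) := by
  classical
  induction s using Finset.induction with
  | empty => simpa using isQPolyFamily_const_one
  | insert x s hx ih =>
    simp only [prod_insert hx]
    exact (h x (mem_insert_self x s)).mul (ih fun k hk => h k (mem_insert_of_mem hk))

end QPolyFamily

section QBinomial

def pochCoeffScalar (k : ℕ) : KK := (-1) ^ k * qq ^ k.choose 2 / qPochK qq k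

/-- `pochCoeffPoly k` evaluated at `q^a` is `(-1)^k q^(k choose 2) [a choose k]_q`, the
coefficient of `z^k` in `(z;q)_a`. -/
def pochCoeffPoly (k : ℕ) : KK[X] :=
  C (pochCoeffScalar k) * ∏ i ∈ range k, (1 - C (qq ^ i)⁻¹ * X)

lemma pochCoeffScalar_succ (k : ℕ) :
    pochCoeffScalar (k + 1) * (1 - qq ^ (k + 1)) = -(qq ^ k * pochCoeffScalar k) := by
  have hk := qPochK_qq_ne_zero k
  have hk1 := qPochK_qq_ne_zero (k + 1)
  have hpoch : qPochK qq (k + 1) = qPochK qq k * (1 - qq ^ (k + 1)) := by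
    rw [qPochK, prod_range_succ, ← qPochK, pow_succ']
  have hchoose : (k + 1).choose 2 = k.choose 2 + k := by
    rw [Nat.choose_succ_succ, Nat.choose_one_right, add_comm]
  rw [pochCoeffScalar, pochCoeffScalar, hpoch, hchoose]
  field_simp [sub_ne_zero.mpr (qq_pow_ne_one k.succ_ne_zero).symm]
  ring

lemma natDegree_prod_one_sub_C_mul_X_le (c : ℕ → KK) (k : ℕ) :
    (∏ i ∈ range k, (1 - C (c i) * X)).natDegree ≤ k := by
  have hfactor : ∀ i, (1 - C (c i) * X).natDegree ≤ 1 := fun i =>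
    (natDegree_sub_le _ _).trans (max_le (by rw [natDegree_one]; exact zero_le_one)
      ((natDegree_C_mul_le _ _).trans natDegree_X_le))
  simpa using (natDegree_prod_le _ _).trans (sum_le_sum fun i (_ : i ∈ range k) => hfactor i)

lemma natDegree_pochCoeffPoly_le (k : ℕ) : (pochCoeffPoly k).natDegree ≤ k :=
  (natDegree_C_mul_le _ _).trans (natDegree_prod_one_sub_C_mul_X_le _ k)

lemma pochCoeffPoly_zero : pochCoeffPoly 0 = 1 := by
  simp [pochCoeffPoly, pochCoeffScalar, qPochK]

lemma eval_pochCoeffPoly_eq_zero {k a : ℕ} (h : a < k) : (pochCoeffPoly k).eval (qq ^ a) = 0 := by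
  rw [pochCoeffPoly, eval_mul, eval_prod, prod_eq_zero (mem_range.mpr h)]
  · simp
  · simp [inv_mul_cancel₀ (pow_ne_zero a qq_ne_zero)]

/-- Pascal's rule for the coefficients `(-1)^k q^(k choose 2) [a choose k]_q`, stated as a
polynomial identity in `X = q^a`. -/
lemma pochCoeffPoly_comp_qq_mul_X (k : ℕ) :
    (pochCoeffPoly (k + 1)).comp (C qq * X) = pochCoeffPoly (k + 1) - X * pochCoeffPoly k := by
  have hscalar : pochCoeffScalar (k + 1) * (qq - (qq ^ k)⁻¹) = pochCoeffScalar k := by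
    have hqk := pow_ne_zero k qq_ne_zero
    have := pochCoeffScalar_succ k
    rw [pow_succ] at this
    field_simp
    linear_combination -this
  have hshift : ∏ i ∈ range (k + 1), (1 - C (qq ^ i)⁻¹ * (C qq * X))
      = (1 - C qq * X) * ∏ i ∈ range k, (1 - C (qq ^ i)⁻¹ * X) := by
    rw [prod_range_succ', mul_comm (G := KK[X])]
    congr 1
    · simp
    · refine Finset.prod_congr rfl fun i _ => ?_
      rw [← mul_assoc, ← C_mul, pow_succ, mul_inv, mul_assoc, inv_mul_cancel₀ qq_ne_zero,
        mul_one]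
  rw [pochCoeffPoly, pochCoeffPoly, mul_comp, C_comp, Polynomial.prod_comp]
  simp only [sub_comp, one_comp, mul_comp, C_comp, X_comp]
  rw [hshift, prod_range_succ, ← hscalar, C_mul, C_sub]
  ring

lemma eval_pochCoeffPoly_succ (k a : ℕ) :
    (pochCoeffPoly (k + 1)).eval (qq ^ (a + 1))
      = (pochCoeffPoly (k + 1)).eval (qq ^ a) - qq ^ a * (pochCoeffPoly k).eval (qq ^ a) := by
  have := congrArg (eval (qq ^ a)) (pochCoeffPoly_comp_qq_mul_X k)
  rwa [eval_comp, eval_mul, eval_C, eval_X, ← pow_succ', eval_sub, eval_mul, eval_X] at this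

lemma qPochL_eq_sum {N : ℕ} (z : LL N) (a : ℕ) :
    qPochL z a = ∑ k ∈ range (a + 1), CK ((pochCoeffPoly k).eval (qq ^ a)) * z ^ k := by
  induction a with
  | zero => simp [qPochL, pochCoeffPoly_zero, CK_one]
  | succ a ih =>
    set c : ℕ → KK := fun k => (pochCoeffPoly k).eval (qq ^ a) with hc
    have hshift : ∑ k ∈ range (a + 1), CK (c k) * z ^ k
        = 1 + ∑ k ∈ range (a + 1), CK (c (k + 1)) * z ^ (k + 1) := by
      rw [sum_range_succ' (fun k => CK (c k) * z ^ k),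
        sum_range_succ (fun k => CK (c (k + 1)) * z ^ (k + 1))]
      simp [hc, eval_pochCoeffPoly_eq_zero, pochCoeffPoly_zero, CK_zero, CK_one, add_comm]
    have hmul : (∑ k ∈ range (a + 1), CK (c k) * z ^ k) * (z * CK (qq ^ a))
        = ∑ k ∈ range (a + 1), CK (qq ^ a) * CK (c k) * z ^ (k + 1) := by
      rw [sum_mul]
      exact sum_congr rfl fun k _ => by ring
    have hrhs : ∑ k ∈ range (a + 1 + 1), CK ((pochCoeffPoly k).eval (qq ^ (a + 1))) * z ^ k
        = ∑ k ∈ range (a + 1), CK (c (k + 1)) * z ^ (k + 1)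
          - ∑ k ∈ range (a + 1), CK (qq ^ a) * CK (c k) * z ^ (k + 1) + 1 := by
      rw [sum_range_succ', pochCoeffPoly_zero, ← sum_sub_distrib]
      simp only [eval_pochCoeffPoly_succ, CK_sub, CK_mul, sub_mul, eval_one, pow_zero, mul_one,
        CK_one, hc]
    rw [show qPochL z (a + 1) = qPochL z a * (1 - z * CK (qq ^ a)) from prod_range_succ _ _,
      ih, hrhs, mul_sub, mul_one, hmul, hshift]
    ring

end QBinomial

section PochhammerFamily

variable {N : ℕ}

lemma coeff_qPochL_single (δ μ : Fin N →₀ ℤ) (a : ℕ) :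
    (qPochL (AddMonoidAlgebra.single δ 1) a).coeff μ
      = ∑ k ∈ range (a + 1), if k • δ = μ then (pochCoeffPoly k).eval (qq ^ a) else 0 := by
  rw [qPochL_eq_sum, AddMonoidAlgebra.coeff_sum, Finsupp.finsetSum_apply]
  refine sum_congr rfl fun k _ => ?_
  rw [AddMonoidAlgebra.single_pow, one_pow, CK_mul_single, mul_one, AddMonoidAlgebra.coeff_single,
    Finsupp.single_apply]

lemma isQPolyFamily_qPochL_single {δ : Fin (N + 1) →₀ ℤ} (h0 : δ 0 = 1)
    (hδ : ∀ j, -1 ≤ δ j) :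
    IsQPolyFamily (fun a => qPochL (AddMonoidAlgebra.single δ 1) a) := by
  have hexp : ∀ {k : ℕ} {μ : Fin (N + 1) →₀ ℤ}, k • δ = μ → μ 0 = k := by
    rintro k μ rfl
    simp [h0]
  refine .mk' (fun a ν hν j => ?_) fun μ hμ => ?_
  · rw [Finsupp.mem_support_iff, coeff_qPochL_single] at hν
    obtain ⟨k, -, hk⟩ := exists_ne_zero_of_sum_ne_zero hν
    obtain rfl : k • δ = ν := by_contra fun h => hk (if_neg h)
    rw [hexp rfl, Finsupp.smul_apply, nsmul_eq_mul]
    nlinarith [hδ j, (k.cast_nonneg : (0 : ℤ) ≤ k)]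
  · set K := (μ 0).toNat
    have hK : (K : ℤ) = μ 0 := Int.toNat_of_nonneg hμ
    by_cases hμK : K • δ = μ
    · refine ⟨pochCoeffPoly K, natDegree_pochCoeffPoly_le K, fun a => ?_⟩
      have hiff : ∀ k : ℕ, k • δ = μ ↔ K = k := fun k =>
        ⟨fun h => by exact_mod_cast hK.trans (hexp h), fun h => h ▸ hμK⟩
      simp only [coeff_qPochL_single, hiff, sum_ite_eq, mem_range]
      split_ifs with hKa
      · rfl
      · exact (eval_pochCoeffPoly_eq_zero (by omega)).symm
    · refine ⟨0, by simp, fun a => ?_⟩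
      rw [coeff_qPochL_single, eval_zero]
      refine sum_eq_zero fun k _ => if_neg fun h => hμK ?_
      rwa [show K = k by exact_mod_cast hK.trans (hexp h)]

end PochhammerFamily

section CompleteHomogeneous

variable {N : ℕ}

lemma mem_piAntidiag_univ {ι : Type} [Fintype ι] [DecidableEq ι] {c : ι → ℕ} {r : ℕ} :
    c ∈ piAntidiag (univ : Finset ι) r ↔ ∑ i, c i = r := by
  simp [mem_piAntidiag]

lemma hsym_zero {ι : Type} [Fintype ι] [DecidableEq ι] (y : ι → LL N) : hsym y 0 = 1 := by
  simp [hsym]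

lemma hsym_comp_equiv {ι κ : Type} [Fintype ι] [DecidableEq ι] [Fintype κ] [DecidableEq κ]
    (e : ι ≃ κ) (y : κ → LL N) (r : ℕ) : hsym (y ∘ e) r = hsym y r := by
  refine sum_nbij' (fun c => c ∘ e.symm) (fun c => c ∘ e) (fun c hc => ?_) (fun c hc => ?_)
    (fun c _ => by ext; simp) (fun c _ => by ext; simp) (fun c _ => ?_)
  · rw [mem_piAntidiag_univ] at hc ⊢
    simpa [← Equiv.sum_comp e] using hc
  · rw [mem_piAntidiag_univ] at hc ⊢
    simpa [← Equiv.sum_comp e.symm] using hc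
  · rw [← Equiv.prod_comp e]
    simp

lemma hsym_option_succ {ι : Type} [Fintype ι] [DecidableEq ι] (y : Option ι → LL N)
    (r : ℕ) :
    hsym y (r + 1) = hsym (y ∘ some) (r + 1) + y none * hsym y r := by
  rw [hsym, ← sum_filter_add_sum_filter_not _ (fun c => c none = 0), hsym, hsym, mul_sum]
  congr 1
  · symm
    refine sum_nbij' (fun c o => o.elim 0 c) (fun c => c ∘ some) (fun c hc => ?_) (fun c hc => ?_)
      (fun c _ => rfl) (fun c hc => ?_) (fun c _ => ?_)
    · simp only [mem_piAntidiag_univ] at hc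
      simp [Fintype.sum_option, hc]
    · simp only [mem_filter, mem_piAntidiag_univ, Fintype.sum_option] at hc
      simpa [mem_piAntidiag_univ, hc.2] using hc.1
    · ext o
      cases o
      · exact (mem_filter.mp hc).2.symm
      · rfl
    · simp [Fintype.prod_option]
  · symm
    refine sum_nbij' (fun c => c + Pi.single none 1) (fun c => c - Pi.single none 1)
      (fun c hc => ?_) (fun c hc => ?_) (fun c _ => ?_) (fun c hc => ?_) (fun c _ => ?_)
    · simp only [mem_piAntidiag_univ] at hc
      simp [Fintype.sum_option, ← hc]
      ring
    · simp only [mem_filter, mem_piAntidiag_univ, Fintype.sum_option] at hc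
      simp only [mem_piAntidiag_univ, Fintype.sum_option, Pi.sub_apply, Pi.single_eq_same]
      simp only [ne_eq, reduceCtorEq, not_false_eq_true, Pi.single_eq_of_ne, tsub_zero]
      omega
    · ext o
      cases o <;> simp
    · have := (mem_filter.mp hc).2
      ext o
      cases o
      · simp
        omega
      · simp
    · simp [Fintype.prod_option, pow_succ]
      ring

end CompleteHomogeneous

section Alphabet

variable {n : ℕ}

lemma cons_le_cons_succ (a : ℕ) (t : Fin n → ℕ) (i : Fin (n + 1)) :
    (Fin.cons a t : Fin (n + 1) → ℕ) i ≤ (Fin.cons (a + 1) t : Fin (n + 1) → ℕ) i := by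
  induction i using Fin.cases <;> simp

/-- Enlarging `a_0` by one adds the single letter indexed by `⟨0, a_0⟩`. -/
def optionSigmaConsEquiv (a : ℕ) (t : Fin n → ℕ) :
    Option ((i : Fin (n + 1)) × Fin ((Fin.cons a t : Fin (n + 1) → ℕ) i)) ≃
      (i : Fin (n + 1)) × Fin ((Fin.cons (a + 1) t : Fin (n + 1) → ℕ) i) where
  toFun o := o.elim ⟨0, Fin.last a⟩ fun p =>
    ⟨p.1, Fin.castLE (cons_le_cons_succ a t p.1) p.2⟩
  invFun p :=
    if h : (p.2 : ℕ) < (Fin.cons a t : Fin (n + 1) → ℕ) p.1 then some ⟨p.1, ⟨p.2, h⟩⟩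
    else none
  left_inv o := by
    rcases o with _ | ⟨i, j⟩
    · simp
    · simp [j.isLt]
  right_inv := by
    rintro ⟨i, j⟩
    induction i using Fin.cases with
    | zero =>
      by_cases h : (j : ℕ) < a
      · simp [h]
      · have hj : (j : ℕ) < a + 1 := by simpa using j.isLt
        have : j = Fin.last a := Fin.ext (by simp; omega)
        simp [this]
    | succ k =>
      have hj : (j : ℕ) < t k := by simpa using j.isLt
      simp [hj]

lemma hsym_alphabetX_cons_succ (a : ℕ) (t : Fin n → ℕ) (m r : ℕ) :
    hsym (alphabetX (Fin.cons (a + 1) t) m) (r + 1)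
      = hsym (alphabetX (Fin.cons a t) m) (r + 1)
        + Xm 0 1 * CK (qq ^ ((a : ℤ) - if 0 < m then 1 else 0))
          * hsym (alphabetX (Fin.cons (a + 1) t) m) r := by
  rw [← hsym_comp_equiv (optionSigmaConsEquiv a t), hsym_option_succ, hsym_comp_equiv]
  rfl

lemma coeff_hsym_alphabetX_cons_succ (a : ℕ) (t : Fin n → ℕ) (m r : ℕ)
    (μ : Fin (n + 1) →₀ ℤ) :
    (hsym (alphabetX (Fin.cons (a + 1) t) m) (r + 1)).coeff μ
      = (hsym (alphabetX (Fin.cons a t) m) (r + 1)).coeff μ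
        + qq ^ ((a : ℤ) - if 0 < m then 1 else 0)
          * (hsym (alphabetX (Fin.cons (a + 1) t) m) r).coeff (μ - Finsupp.single 0 1) := by
  rw [hsym_alphabetX_cons_succ, Xm, CK, AddMonoidAlgebra.single_mul_single, add_zero, one_mul,
    AddMonoidAlgebra.coeff_add, Finsupp.add_apply, AddMonoidAlgebra.coeff_single_mul_apply,
    neg_add_eq_sub]

variable {N : ℕ}

lemma prod_alphabetX_pow (a : Fin N → ℕ) (m : ℕ) (c : (i : Fin N) × Fin (a i) → ℕ) :
    ∏ p, alphabetX a m p ^ c p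
      = AddMonoidAlgebra.single (∑ p, c p • Finsupp.single p.1 (1 : ℤ))
      (∏ p, (qq ^ ((p.2 : ℤ) - if (p.1 : ℕ) < m then 1 else 0)) ^ c p) := by
  simp only [alphabetX, Xm, CK, AddMonoidAlgebra.single_mul_single, add_zero, one_mul,
    AddMonoidAlgebra.single_pow, AddMonoidAlgebra.prod_single]

lemma exp_eq_sum_of_coeff_hsym_alphabetX_ne_zero {a : Fin N → ℕ} {m r : ℕ}
    {μ : Fin N →₀ ℤ} (h : (hsym (alphabetX a m) r).coeff μ ≠ 0) :
    ∃ c : (i : Fin N) × Fin (a i) → ℕ,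
      ∀ i, μ i = ∑ p ∈ univ.filter (·.1 = i), (c p : ℤ) := by
  classical
  rw [hsym, AddMonoidAlgebra.coeff_sum, Finsupp.finsetSum_apply] at h
  obtain ⟨c, -, hc⟩ := exists_ne_zero_of_sum_ne_zero h
  rw [prod_alphabetX_pow, AddMonoidAlgebra.coeff_single, Finsupp.single_apply] at hc
  obtain rfl : ∑ p, c p • Finsupp.single p.1 (1 : ℤ) = μ :=
    by_contra fun hne => hc (if_neg hne)
  refine ⟨c, fun i => ?_⟩
  simp [Finsupp.finsetSum_apply, Finsupp.single_apply, sum_filter]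

lemma exp_nonneg_of_coeff_hsym_alphabetX_ne_zero {a : Fin N → ℕ} {m r : ℕ}
    {μ : Fin N →₀ ℤ} (h : (hsym (alphabetX a m) r).coeff μ ≠ 0) (i : Fin N) :
    0 ≤ μ i := by
  obtain ⟨c, hc⟩ := exp_eq_sum_of_coeff_hsym_alphabetX_ne_zero h
  rw [hc]
  positivity

lemma exp_eq_zero_of_coeff_hsym_alphabetX_ne_zero {a : Fin N → ℕ} {m r : ℕ}
    {μ : Fin N →₀ ℤ} (h : (hsym (alphabetX a m) r).coeff μ ≠ 0) {i : Fin N}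
    (hi : a i = 0) :
    μ i = 0 := by
  obtain ⟨c, hc⟩ := exp_eq_sum_of_coeff_hsym_alphabetX_ne_zero h
  rw [hc i, sum_eq_zero]
  rintro ⟨j, k⟩ hj
  obtain rfl : j = i := (mem_filter.mp hj).2
  have := k.isLt
  omega

end Alphabet

section HsymFamily

/-- `hPoly s` evaluated at `q^a` is `h_s(1, q, …, q^(a-1)) = [a+s-1 choose s]_q`. -/
def hPoly (s : ℕ) : KK[X] := C (qPochK qq s)⁻¹ * ∏ i ∈ range s, (1 - C (qq ^ i) * X)

lemma natDegree_hPoly_le (s : ℕ) : (hPoly s).natDegree ≤ s :=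
  (natDegree_C_mul_le _ _).trans (natDegree_prod_one_sub_C_mul_X_le _ s)

lemma hPoly_zero : hPoly 0 = 1 := by
  simp [hPoly, qPochK]

lemma eval_one_hPoly {s : ℕ} (hs : s ≠ 0) : (hPoly s).eval 1 = 0 := by
  rw [hPoly, eval_mul, eval_prod, prod_eq_zero (mem_range.mpr (Nat.pos_of_ne_zero hs))] <;> simp

/-- Pascal's rule `h_{s+1}(1, …, q^a) = h_{s+1}(1, …, q^(a-1)) + q^a h_s(1, …, q^a)`, as a
polynomial identity in `X = q^a`. -/
lemma hPoly_comp_qq_mul_X (s : ℕ) :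
    (hPoly (s + 1)).comp (C qq * X) = hPoly (s + 1) + X * (hPoly s).comp (C qq * X) := by
  have hscalar : (qPochK qq (s + 1))⁻¹ * (1 - qq ^ (s + 1)) = (qPochK qq s)⁻¹ := by
    rw [qPochK, prod_range_succ, ← qPochK, ← pow_succ', mul_inv,
      mul_assoc, inv_mul_cancel₀ (sub_ne_zero.mpr (qq_pow_ne_one s.succ_ne_zero).symm), mul_one]
  have hshift : ∀ k, ∏ i ∈ range k, (1 - C (qq ^ i) * (C qq * X))
      = ∏ i ∈ range k, (1 - C (qq ^ (i + 1)) * X) := fun k =>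
    prod_congr rfl fun i _ => by rw [← mul_assoc, ← C_mul, ← pow_succ]
  rw [hPoly, hPoly, mul_comp, mul_comp, C_comp, C_comp, Polynomial.prod_comp,
    Polynomial.prod_comp]
  simp only [sub_comp, one_comp, mul_comp, C_comp, X_comp]
  rw [hshift, hshift, prod_range_succ, prod_range_succ', ← hscalar, C_mul, C_sub, C_pow]
  simp only [pow_zero, C_1, one_mul]
  ring

lemma eval_hPoly_succ (s a : ℕ) :
    (hPoly (s + 1)).eval (qq ^ (a + 1))
      = (hPoly (s + 1)).eval (qq ^ a) + qq ^ a * (hPoly s).eval (qq ^ (a + 1)) := by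
  have := congrArg (eval (qq ^ a)) (hPoly_comp_qq_mul_X s)
  rwa [eval_comp, eval_mul, eval_C, eval_X, ← pow_succ', eval_add, eval_mul, eval_X, eval_comp,
    eval_mul, eval_C, eval_X, ← pow_succ'] at this

variable {n : ℕ} (t : Fin n → ℕ) (m : ℕ)

lemma coeff_hsym_alphabetX_cons_zero {r : ℕ} {μ : Fin (n + 1) →₀ ℤ} (hμ : 0 < μ 0) :
    (hsym (alphabetX (Fin.cons 0 t) m) r).coeff μ = 0 := by
  by_contra h
  have := exp_eq_zero_of_coeff_hsym_alphabetX_ne_zero h (i := 0) rfl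
  omega

lemma coeff_hsym_alphabetX_cons_of_exp_zero_eq_zero {r : ℕ} {μ : Fin (n + 1) →₀ ℤ}
    (hμ : μ 0 = 0) (a : ℕ) :
    (hsym (alphabetX (Fin.cons a t) m) r).coeff μ
      = (hsym (alphabetX (Fin.cons 0 t) m) r).coeff μ := by
  cases r with
  | zero => simp only [hsym_zero]
  | succ r =>
    induction a with
    | zero => rfl
    | succ a ih =>
      rw [coeff_hsym_alphabetX_cons_succ, ih, add_eq_left, mul_eq_zero]
      right
      by_contra h
      have := exp_nonneg_of_coeff_hsym_alphabetX_ne_zero h 0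
      simp [hμ] at this

lemma coeff_hsym_alphabetX_cons_one_succ {r : ℕ} {μ : Fin (n + 1) →₀ ℤ} (hμ : 0 < μ 0) :
    (hsym (alphabetX (Fin.cons 1 t) m) (r + 1)).coeff μ
      = qq ^ (-if 0 < m then 1 else 0 : ℤ)
        * (hsym (alphabetX (Fin.cons 1 t) m) r).coeff (μ - Finsupp.single 0 1) := by
  rw [coeff_hsym_alphabetX_cons_succ, coeff_hsym_alphabetX_cons_zero t m hμ, zero_add,
    Nat.cast_zero, zero_sub]

lemma coeff_hsym_alphabetX_cons (r : ℕ) {μ : Fin (n + 1) →₀ ℤ} (hμ : 0 ≤ μ 0)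
    (a : ℕ) :
    (hsym (alphabetX (Fin.cons a t) m) r).coeff μ
      = (hsym (alphabetX (Fin.cons 1 t) m) r).coeff μ * (hPoly (μ 0).toNat).eval (qq ^ a) := by
  induction r generalizing μ a with
  | zero =>
    rcases hμ.eq_or_lt with h0 | hpos
    · simp [← h0, hPoly_zero, hsym_zero]
    · have hne : μ ≠ 0 := fun h => by simp [h] at hpos
      simp [hsym_zero, coeff_one, hne]
  | succ r ih =>
    rcases hμ.eq_or_lt with h0 | hpos
    · rw [coeff_hsym_alphabetX_cons_of_exp_zero_eq_zero t m h0.symm a,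
        coeff_hsym_alphabetX_cons_of_exp_zero_eq_zero t m h0.symm 1, ← h0]
      simp [hPoly_zero]
    obtain ⟨k, hk⟩ : ∃ k, (μ 0).toNat = k + 1 := ⟨(μ 0).toNat - 1, by omega⟩
    have hμ' : ((μ - Finsupp.single 0 1 : Fin (n + 1) →₀ ℤ) 0).toNat = k := by
      simp
      omega
    induction a with
    | zero =>
      rw [coeff_hsym_alphabetX_cons_zero t m hpos, pow_zero, hk, eval_one_hPoly k.succ_ne_zero,
        mul_zero]
    | succ a iha =>
      have hpow : qq ^ ((a : ℤ) - if 0 < m then 1 else 0)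
          = qq ^ a * qq ^ (-if 0 < m then 1 else 0 : ℤ) := by
        rw [sub_eq_add_neg, zpow_add₀ qq_ne_zero, zpow_natCast]
      rw [coeff_hsym_alphabetX_cons_succ, iha, ih (by simp; omega) (a + 1), hμ', hk,
        coeff_hsym_alphabetX_cons_one_succ t m hpos, eval_hPoly_succ, hpow]
      ring

lemma isQPolyFamily_hsym_alphabetX (r : ℕ) :
    IsQPolyFamily (fun a => hsym (alphabetX (Fin.cons a t) m) r) := by
  refine .mk' (fun a ν hν j => ?_) fun μ hμ => ?_
  · have := exp_nonneg_of_coeff_hsym_alphabetX_ne_zero (Finsupp.mem_support_iff.mp hν)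
    linarith [this 0, this j]
  · refine ⟨C ((hsym (alphabetX (Fin.cons 1 t) m) r).coeff μ) * hPoly (μ 0).toNat,
      (natDegree_C_mul_le _ _).trans (natDegree_hPoly_le _), fun a => ?_⟩
    rw [coeff_hsym_alphabetX_cons t m r hμ, eval_mul, eval_C]

lemma isQPolyFamily_hPart (lam : List ℕ) :
    IsQPolyFamily (fun a => hPart (Fin.cons a t) m lam) := by
  induction lam with
  | nil => simpa [hPart] using isQPolyFamily_const_one
  | cons r lam ih => simpa [hPart] using (isQPolyFamily_hsym_alphabetX t m r).mul ih

end HsymFamily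

section DysonProduct

variable {N : ℕ}

lemma sum_pairs_eq_sum_erase (a : Fin N → ℤ) (k : Fin N) :
    ∑ p ∈ univ.filter (fun p : Fin N × Fin N => p.1 < p.2),
      ((if p.2 = k then a p.1 else 0) + if p.1 = k then a p.2 else 0)
      = ∑ j ∈ univ.erase k, a j := by
  have h1 : ∑ p ∈ univ.filter (fun p : Fin N × Fin N => p.1 < p.2),
      (if p.2 = k then a p.1 else 0) = ∑ j ∈ univ.filter (· < k), a j := by
    rw [sum_filter, sum_filter, Fintype.sum_prod_type]
    refine sum_congr rfl fun i _ => ?_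
    rw [Fintype.sum_eq_single k fun j hj => by simp [hj]]
    simp
  have h2 : ∑ p ∈ univ.filter (fun p : Fin N × Fin N => p.1 < p.2),
      (if p.1 = k then a p.2 else 0) = ∑ j ∈ univ.filter (k < ·), a j := by
    rw [sum_filter, sum_filter, Fintype.sum_prod_type,
      Fintype.sum_eq_single k fun i hi => by simp [hi]]
    simp
  have h3 : univ.erase k = univ.filter (· < k) ∪ univ.filter (k < ·) := by
    ext j
    simp
  rw [sum_add_distrib, h1, h2, h3, sum_union (disjoint_filter.mpr fun j _ h h' => lt_asymm h h')]

lemma lowerExpBound_monomial_div (k : Fin N) {i j : Fin N} (hij : i ≠ j) (c : KK) :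
    LowerExpBound k (-if j = k then 1 else 0)
      (AddMonoidAlgebra.single (Finsupp.single i 1 + Finsupp.single j (-1)) c) := by
  refine lowerExpBound_single c ?_
  simp only [Finsupp.add_apply, Finsupp.single_apply]
  split_ifs <;> simp_all

lemma lowerExpBound_dysonProd (a : Fin N → ℕ) (k : Fin N) :
    LowerExpBound k (-∑ j ∈ univ.erase k, (a j : ℤ)) (dysonProd a) := by
  rw [← sum_pairs_eq_sum_erase, ← sum_neg_distrib]
  refine lowerExpBound_prod _ _ _ fun p hp => ?_
  have hne : p.1 ≠ p.2 := (mem_filter.mp hp).2.ne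
  have hleft := lowerExpBound_qPochL (lowerExpBound_monomial_div k hne 1)
    (by split_ifs <;> simp) (a p.1)
  have hright := lowerExpBound_qPochL (lowerExpBound_monomial_div k hne.symm qq)
    (by split_ifs <;> simp) (a p.2)
  rw [← Xm_mul_Xm] at hleft
  rw [← mul_one qq, ← CK_mul_single, ← Xm_mul_Xm, ← mul_assoc] at hright
  refine (hleft.mul hright).mono (le_of_eq ?_)
  split_ifs <;> ring

end DysonProduct

section ConstantTerm

variable {N : ℕ}

lemma IsQPolyFamily.exists_poly_CT_mul {W : ℕ → LL (N + 1)} (hW : IsQPolyFamily W)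
    {G : LL (N + 1)} {D : ℤ} (hG : LowerExpBound 0 (-D) G) (hD : 0 ≤ D) :
    ∃ P : KK[X], (P.natDegree : ℤ) ≤ D ∧ ∀ a, CT (W a * G) = P.eval (qq ^ a) := by
  choose Q hQdeg hQ using hW.exists_poly
  refine ⟨∑ ν ∈ G.coeff.support, C (G.coeff ν) * Q (-ν), ?_, fun a => ?_⟩
  · have : (∑ ν ∈ G.coeff.support, C (G.coeff ν) * Q (-ν)).natDegree ≤ D.toNat :=
      natDegree_sum_le_of_forall_le _ _ fun ν hν => (natDegree_C_mul_le _ _).trans <|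
        (hQdeg _).trans (by have := hG ν hν; simp only [Finsupp.neg_apply]; omega)
    omega
  · rw [CT, mul_comm, coeff_mul_eq_sum_support, eval_finsetSum]
    exact sum_congr rfl fun ν _ => by rw [eval_mul, eval_C, zero_sub, hQ]

lemma IsQPolyFamily.CT_mul_eq_zero {W : ℕ → LL (N + 1)} (hW : IsQPolyFamily W)
    {G : LL (N + 1)} {d : ℤ} (hG : LowerExpBound 0 d G) (hd : 0 < d) (a : ℕ) :
    CT (W a * G) = 0 :=
  ((show LowerExpBound 0 0 (W a) from fun _ hν => hW.exp_zero_nonneg hν).mul hG).CT_eq_zero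
    (by omega)

lemma lowerExpBound_prod_Xm (k : Fin N) (e : Fin N → ℤ) :
    LowerExpBound k (e k) (∏ i, Xm i (e i)) := by
  have := lowerExpBound_prod univ (fun i => Xm i (e i)) (fun i => Finsupp.single i (e i) k)
    fun i _ => lowerExpBound_single 1 le_rfl
  simpa [Finsupp.single_apply] using this

end ConstantTerm

section DysonSplit

variable {n : ℕ}

lemma isQPolyFamily_qPochL_x0_div {j : Fin (n + 1)} (hj : j ≠ 0) :
    IsQPolyFamily (fun a => qPochL (Xm 0 1 * Xm j (-1)) a) := by
  simp only [Xm_mul_Xm]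
  refine isQPolyFamily_qPochL_single (by simp [hj.symm]) fun i => ?_
  simp only [Finsupp.add_apply, Finsupp.single_apply]
  split_ifs <;> omega

/-- The only factors of the `q`-Dyson product that involve `a_0`. -/
def dysonHead (n a : ℕ) : LL (n + 1) :=
  ∏ j ∈ univ.filter (0 < ·), qPochL (Xm 0 1 * Xm j (-1)) a

lemma dysonProd_cons (a : ℕ) (t : Fin n → ℕ) :
    dysonProd (Fin.cons a t : Fin (n + 1) → ℕ)
      = dysonHead n a * dysonProd (Fin.cons 0 t : Fin (n + 1) → ℕ) := by
  have hpair : ∀ p ∈ univ.filter (fun p : Fin (n + 1) × Fin (n + 1) => p.1 < p.2),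
      qPochL (Xm p.1 1 * Xm p.2 (-1)) ((Fin.cons a t : Fin (n + 1) → ℕ) p.1)
        * qPochL (CK qq * Xm p.2 1 * Xm p.1 (-1)) ((Fin.cons a t : Fin (n + 1) → ℕ) p.2)
      = (if p.1 = 0 then qPochL (Xm p.1 1 * Xm p.2 (-1)) a else 1)
        * (qPochL (Xm p.1 1 * Xm p.2 (-1)) ((Fin.cons 0 t : Fin (n + 1) → ℕ) p.1)
          * qPochL (CK qq * Xm p.2 1 * Xm p.1 (-1))
            ((Fin.cons 0 t : Fin (n + 1) → ℕ) p.2)) := by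
    rintro ⟨i, j⟩ hp
    have hij : i < j := (mem_filter.mp hp).2
    obtain ⟨j, rfl⟩ := Fin.exists_succ_eq.mpr (Fin.ne_zero_of_lt hij)
    induction i using Fin.cases <;> simp [qPochL]
  have hA : ∏ p ∈ univ.filter (fun p : Fin (n + 1) × Fin (n + 1) => p.1 < p.2),
      (if p.1 = 0 then qPochL (Xm p.1 1 * Xm p.2 (-1)) a else 1)
      = dysonHead n a := by
    rw [dysonHead, prod_filter, prod_filter, Fintype.prod_prod_type,
      Fintype.prod_eq_single 0 fun i hi => by simp [hi]]
    simp
  rw [dysonProd, prod_congr rfl hpair, prod_mul_distrib, hA, dysonProd]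

lemma isQPolyFamily_dysonHead : IsQPolyFamily (dysonHead n) :=
  isQPolyFamily_prod _ _ fun _ hj => isQPolyFamily_qPochL_x0_div (mem_filter.mp hj).2.ne'

lemma Dterm_cons (v : Fin (n + 1) → ℤ) (lam : List ℕ) (a : ℕ) (t : Fin n → ℕ)
    (m : ℕ) :
    Dterm (n + 1) v lam (Fin.cons a t) m
      = CT ((hPart (Fin.cons a t) m lam * dysonHead n a)
        * ((∏ i, Xm i (-v i)) * dysonProd (Fin.cons 0 t : Fin (n + 1) → ℕ))) := by
  rw [Dterm, dysonProd_cons]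
  congr 1
  ring

end DysonSplit

end QDyson

open QDyson

theorem qDyson_polynomiality_general (n : ℕ) (atail : Fin n → ℕ) (v : Fin (n+1) → ℤ)
    (lam : List ℕ) (m : ℕ) :
    ((-(v 0) ≤ (∑ i, (atail i : ℤ))) →
      ∃ P : Polynomial KK, (P.natDegree : ℤ) ≤ (∑ i, (atail i : ℤ)) + v 0 ∧
        ∀ a0 : ℕ, Dterm (n+1) v lam (Fin.cons a0 atail) m = P.eval (qq ^ a0)) ∧
    (((∑ i, (atail i : ℤ)) < -(v 0)) →
      ∀ a0 : ℕ, Dterm (n+1) v lam (Fin.cons a0 atail) m = 0) := by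
  have hW : IsQPolyFamily fun a => hPart (Fin.cons a atail) m lam * dysonHead n a :=
    (isQPolyFamily_hPart atail m lam).mul isQPolyFamily_dysonHead
  have hdyson : ∑ j ∈ Finset.univ.erase 0, ((Fin.cons 0 atail : Fin (n + 1) → ℕ) j : ℤ)
      = ∑ i, (atail i : ℤ) := by
    rw [Finset.sum_erase _ (by simp), Fin.sum_univ_succ]
    simp
  have hG : LowerExpBound 0 (-v 0 + -∑ i, (atail i : ℤ))
      ((∏ i, Xm i (-v i)) * dysonProd (Fin.cons 0 atail : Fin (n + 1) → ℕ)) :=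
    hdyson ▸ (lowerExpBound_prod_Xm 0 (-v ·)).mul (lowerExpBound_dysonProd _ 0)
  refine ⟨fun hle => ?_, fun hlt a => ?_⟩
  · obtain ⟨P, hPdeg, hP⟩ :=
      hW.exists_poly_CT_mul (D := ∑ i, (atail i : ℤ) + v 0) (hG.mono (by omega)) (by omega)
    exact ⟨P, hPdeg, fun a => by rw [Dterm_cons, hP]⟩
  · rw [Dterm_cons]
    exact hW.CT_mul_eq_zero hG (by omega) a

/-- **Proposition 5.3 (polynomiality).** For fixed non-negative integers `a_1,…,a_n`,
if `-v_0 ≤ a_1+⋯+a_n` then `D_{v,λ}((a_0,a_1,…,a_n),m)` is a polynomial in `q^{a_0}` of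
degree at most `a_1+⋯+a_n+v_0`; if `-v_0 > a_1+⋯+a_n` then it vanishes identically. -/
theorem qDyson_polynomiality (n : ℕ) (atail : Fin n → ℕ) (v : Fin (n+1) → ℤ)
    (lam : List ℕ) (hpart : lam.Pairwise (· ≥ ·)) (hsum : (lam.sum : ℤ) = ∑ i, v i)
    (m : ℕ) (hm : m ≤ n+1) :
    ((-(v 0) ≤ (∑ i, (atail i : ℤ))) →
      ∃ P : Polynomial KK, (P.natDegree : ℤ) ≤ (∑ i, (atail i : ℤ)) + v 0 ∧
        ∀ a0 : ℕ, Dterm (n+1) v lam (Fin.cons a0 atail) m = P.eval (qq ^ a0)) ∧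
    (((∑ i, (atail i : ℤ)) < -(v 0)) →
      ∀ a0 : ℕ, Dterm (n+1) v lam (Fin.cons a0 atail) m = 0) :=
  qDyson_polynomiality_general n atail v lam m

end
end

section
/- Let n ≥ 1, let L(x_1,…,x_n) be a Laurent polynomial in x_1,…,x_n with coefficients in ℚ(q), let a_1,…,a_n be fixed non-negative integers, and let t be an integer. If t ≤ a_1+⋯+a_n, then there exists a polynomial P with coefficients in ℚ(q), of degree at most a_1+⋯+a_n−t, such that for every non-negative integer a_0, CT_x x_0^{t} · L(x_1,…,x_n) · ∏_{0≤i<j≤n}(x_i/x_j;q)_{a_i}(q x_j/x_i;q)_{a_j} = P(q^{a_0}). If t > a_1+⋯+a_n, then this constant term vanishes for every non-negative integer a_0. -/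
/- Laurent polynomials in `N` variables `x_0, …, x_{N-1}` over `K = ℚ(q)`,
constant-term extraction, the q-Dyson product, the symmetric-function data and
the constant term `D_{v,λ}(a,m)` from the paper. -/

noncomputable section

/-- Embedding of Laurent polynomials in `x_1,…,x_n` into Laurent polynomials in
`x_0,x_1,…,x_n` (shifting variable indices by one). -/
def embedTail (n : ℕ) (f : AddMonoidAlgebra KK (Fin n →₀ ℤ)) : LL (n+1) :=
  AddMonoidAlgebra.ofCoeff (Finsupp.mapDomain (Finsupp.mapDomain Fin.succ) f.coeff)


/-!
Split the q-Dyson product for `(a_0, a_1, …, a_n)` into `∏_j (x_0/x_j; q)_{a_0}`, which carries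
all the dependence on `a_0`, and a cofactor in which `x_0` occurs with exponent at least
`-(a_1 + ⋯ + a_n)`. Write each `(z; q)_{a_0} = ∑_k c_k(q^{a_0}) z^k`, where by the q-binomial
theorem `c_k` is a polynomial of degree `k`. Since `x_0^t L` and the cofactor leave `x_0` with
exponent at least `t - (a_1 + ⋯ + a_n)`, only monomials `∏_j (x_0/x_j)^{k_j}` with
`∑ k_j ≤ a_1 + ⋯ + a_n - t` contribute to the constant term, each with a coefficient
`∏_j c_{k_j}(q^{a_0})` of degree `∑ k_j`.
-/

open Polynomial Finset

section PolyInPow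

variable {R : Type*} [CommRing R] {q : R}

variable (q) in
def IsPolyInPow (d : ℤ) (f : ℕ → R) : Prop :=
  ∃ P : R[X], (P = 0 ∨ (P.natDegree : ℤ) ≤ d) ∧ ∀ a, f a = P.eval (q ^ a)

lemma IsPolyInPow.apply_eq_zero {d : ℤ} {f : ℕ → R} (hf : IsPolyInPow q d f) (hd : d < 0)
    (a : ℕ) : f a = 0 := by
  obtain ⟨P, rfl | hP, hfP⟩ := hf
  · simp [hfP]
  · omega

lemma isPolyInPow_const (c : R) {d : ℤ} (hd : 0 ≤ d) : IsPolyInPow q d fun _ => c :=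
  ⟨C c, Or.inr (by simpa using hd), fun _ => eval_C.symm⟩

lemma isPolyInPow_zero (d : ℤ) : IsPolyInPow q d fun _ => 0 :=
  ⟨0, Or.inl rfl, fun _ => eval_zero.symm⟩

lemma IsPolyInPow.add {d : ℤ} {f g : ℕ → R} (hf : IsPolyInPow q d f)
    (hg : IsPolyInPow q d g) : IsPolyInPow q d (f + g) := by
  obtain ⟨P, hP, hfP⟩ := hf
  obtain ⟨Q, hQ, hgQ⟩ := hg
  refine ⟨P + Q, ?_, fun a => by simp [hfP, hgQ]⟩
  rcases hP with rfl | hP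
  · simpa using hQ
  rcases hQ with rfl | hQ
  · simpa using Or.inr hP
  exact Or.inr ((Int.ofNat_le.2 (natDegree_add_le P Q)).trans (by omega))

lemma IsPolyInPow.mul {d e : ℤ} {f g : ℕ → R} (hf : IsPolyInPow q d f)
    (hg : IsPolyInPow q e g) : IsPolyInPow q (d + e) (f * g) := by
  obtain ⟨P, hP, hfP⟩ := hf
  obtain ⟨Q, hQ, hgQ⟩ := hg
  refine ⟨P * Q, ?_, fun a => by simp [hfP, hgQ]⟩
  rcases hP with rfl | hP
  · simp
  rcases hQ with rfl | hQ
  · simp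
  exact Or.inr ((Int.ofNat_le.2 natDegree_mul_le).trans (by omega))

lemma isPolyInPow_sum {ι : Type*} (s : Finset ι) {d : ℤ} {f : ι → ℕ → R}
    (hf : ∀ i ∈ s, IsPolyInPow q d (f i)) : IsPolyInPow q d fun a => ∑ i ∈ s, f i a := by
  classical
  induction s using Finset.induction_on with
  | empty => simpa using isPolyInPow_zero d
  | insert i s his ih =>
    simp only [sum_insert his]
    exact (hf i (mem_insert_self i s)).add (ih fun j hj => hf j (mem_insert_of_mem hj))

end PolyInPow

section QPochhammer

variable {F : Type*} [Field F] (q : F)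

def qPochPoly (a : ℕ) : F[X] := ∏ i ∈ range a, (1 - C (q ^ i) * X)

def qPochCoeffConst : ℕ → F
  | 0 => 1
  | m + 1 => qPochCoeffConst m / (q - (q ^ m)⁻¹)

/- By the q-binomial theorem the coefficient of `X ^ k` in `(X; q)_a` is a constant multiple of
`∏_{i<k} (1 - q^{a-i})`, i.e. of this polynomial evaluated at `q ^ a`; the constants are the ones
forced by `(X; q)_{a+1} = (X; q)_a (1 - q^a X)`. -/
def qPochCoeffPoly (k : ℕ) : F[X] :=
  C (qPochCoeffConst q k) * ∏ i ∈ range k, (1 - C ((q ^ i)⁻¹) * X)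

lemma natDegree_one_sub_C_mul_X_le (c : F) : (1 - C c * X).natDegree ≤ 1 :=
  (natDegree_sub_le _ _).trans (max_le (by simp) ((natDegree_C_mul_le c X).trans natDegree_X_le))

lemma natDegree_qPochPoly_le (a : ℕ) : (qPochPoly q a).natDegree ≤ a := by
  refine (natDegree_prod_le _ _).trans ?_
  exact (sum_le_sum fun i _ => natDegree_one_sub_C_mul_X_le (q ^ i)).trans (by simp)

lemma natDegree_qPochCoeffPoly_le (k : ℕ) : (qPochCoeffPoly q k).natDegree ≤ k := by
  refine natDegree_C_mul_le _ _ |>.trans <| (natDegree_prod_le _ _).trans ?_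
  exact (sum_le_sum fun i _ => natDegree_one_sub_C_mul_X_le ((q ^ i)⁻¹)).trans (by simp)

lemma eval_qPochCoeffPoly (k : ℕ) (x : F) :
    (qPochCoeffPoly q k).eval x =
      qPochCoeffConst q k * ∏ i ∈ range k, (1 - (q ^ i)⁻¹ * x) := by
  simp [qPochCoeffPoly, eval_prod]

variable {q}

lemma eval_mul_qPochCoeffPoly_succ (hq : q ≠ 0) {m : ℕ} (hm : q ^ (m + 1) ≠ 1) (s : F) :
    (qPochCoeffPoly q (m + 1)).eval (q * s) =
      (qPochCoeffPoly q (m + 1)).eval s - s * (qPochCoeffPoly q m).eval s := by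
  have hden : q * q ^ m - 1 ≠ 0 := by
    rw [← pow_succ']
    exact sub_ne_zero.2 hm
  have hshift : ∏ i ∈ range m, (1 - (q ^ (i + 1))⁻¹ * (q * s)) =
      ∏ i ∈ range m, (1 - (q ^ i)⁻¹ * s) :=
    prod_congr rfl fun i _ => by rw [pow_succ]; field_simp
  rw [eval_qPochCoeffPoly, eval_qPochCoeffPoly, eval_qPochCoeffPoly, prod_range_succ',
    prod_range_succ, hshift, qPochCoeffConst]
  generalize ∏ i ∈ range m, (1 - (q ^ i)⁻¹ * s) = Q
  field_simp
  ring

lemma coeff_qPochPoly (hq : q ≠ 0) (hq1 : ∀ m : ℕ, q ^ (m + 1) ≠ 1) (a k : ℕ) :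
    (qPochPoly q a).coeff k = (qPochCoeffPoly q k).eval (q ^ a) := by
  induction a generalizing k with
  | zero =>
    rcases k with _ | m
    · simp [qPochPoly, qPochCoeffPoly, qPochCoeffConst]
    · simp [qPochPoly, eval_qPochCoeffPoly, prod_range_succ', coeff_one]
  | succ a ih =>
    have hsucc : qPochPoly q (a + 1) = qPochPoly q a - C (q ^ a) * (X * qPochPoly q a) := by
      rw [qPochPoly, prod_range_succ, ← qPochPoly]
      ring
    rcases k with _ | m
    · simp [hsucc, ih, qPochCoeffPoly, qPochCoeffConst]
    · rw [hsucc, coeff_sub, coeff_C_mul, coeff_X_mul, ih, ih, pow_succ',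
        eval_mul_qPochCoeffPoly_succ hq (hq1 m)]

lemma isPolyInPow_coeff_qPochPoly (hq : q ≠ 0) (hq1 : ∀ m : ℕ, q ^ (m + 1) ≠ 1) (k : ℕ) :
    IsPolyInPow q k fun a => (qPochPoly q a).coeff k :=
  ⟨qPochCoeffPoly q k, Or.inr (Int.ofNat_le.2 (natDegree_qPochCoeffPoly_le q k)),
    fun a => coeff_qPochPoly hq hq1 a k⟩

end QPochhammer

lemma qq_ne_zero : qq ≠ 0 := RatFunc.X_ne_zero

lemma qq_pow_succ_ne_one (m : ℕ) : qq ^ (m + 1) ≠ 1 := by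
  intro h
  have := congrArg RatFunc.intDegree h
  rw [qq, ← RatFunc.algebraMap_X, ← map_pow, RatFunc.intDegree_polynomial,
    RatFunc.intDegree_one, natDegree_X_pow] at this
  omega

section Laurent

open AddMonoidAlgebra

variable {N : ℕ}

/-- `f.supDegree (negExp i) ≤ d` says that `x_i` occurs in every monomial of `f` with exponent at
least `-d`. -/
def negExp (i : Fin N) (ν : Fin N →₀ ℤ) : WithBot ℤ := ((-ν i : ℤ) : WithBot ℤ)

lemma negExp_zero (i : Fin N) : negExp i 0 = 0 := by simp [negExp]

lemma negExp_add (i : Fin N) (ν μ : Fin N →₀ ℤ) :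
    negExp i (ν + μ) = negExp i ν + negExp i μ := by
  simp only [negExp, Finsupp.add_apply, neg_add]
  norm_cast

lemma CT_eq_zero_of_supDegree_negExp_neg {i : Fin N} {f : LL N}
    (hf : f.supDegree (negExp i) < 0) : CT f = 0 :=
  coeff_eq_zero_of_not_le_supDegree (D := negExp i) (by rw [negExp_zero]; exact hf.not_ge)

lemma supDegree_negExp_mul_le (i : Fin N) (f g : LL N) :
    (f * g).supDegree (negExp i) ≤ f.supDegree (negExp i) + g.supDegree (negExp i) :=
  supDegree_mul_le (negExp_add i)

lemma supDegree_negExp_pow_le {i : Fin N} {z : LL N} {e : ℤ} (hz : z.supDegree (negExp i) ≤ e)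
    (k : ℕ) : (z ^ k).supDegree (negExp i) ≤ ((k * e : ℤ) : WithBot ℤ) := by
  refine (sup_support_pow_le (negExp_zero i).le (fun a b => (negExp_add i a b).le) k z).trans ?_
  refine (nsmul_le_nsmul_right hz k).trans_eq ?_
  norm_cast

lemma supDegree_negExp_CK_le (i : Fin N) (c : KK) : (CK c : LL N).supDegree (negExp i) ≤ 0 := by
  classical
  rw [CK, supDegree_single, negExp_zero]
  split_ifs <;> simp

lemma supDegree_negExp_qPochL_le {i : Fin N} {z : LL N} {e : ℤ}
    (hz : z.supDegree (negExp i) ≤ e) (he : 0 ≤ e) (a : ℕ) :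
    (qPochL z a).supDegree (negExp i) ≤ ((a * e : ℤ) : WithBot ℤ) := by
  have hfactor (c : KK) : (1 - z * CK c).supDegree (negExp i) ≤ (e : WithBot ℤ) := by
    refine supDegree_sub_le.trans (sup_le ?_ ?_)
    · exact (supDegree_negExp_CK_le i 1).trans (by exact_mod_cast he)
    · refine (supDegree_negExp_mul_le i z (CK c)).trans ?_
      simpa using add_le_add hz (supDegree_negExp_CK_le i c)
  refine (supDegree_prod_le (negExp_zero i) (negExp_add i)).trans ?_
  refine (sum_le_sum fun k _ => hfactor (qq ^ k)).trans_eq ?_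
  rw [sum_const, card_range]
  norm_cast

lemma supDegree_negExp_Xm_self (i : Fin N) (e : ℤ) :
    (Xm i e : LL N).supDegree (negExp i) = ((-e : ℤ) : WithBot ℤ) := by
  rw [Xm, supDegree_single_ne_zero _ one_ne_zero, negExp, Finsupp.single_eq_same]

lemma supDegree_negExp_Xm_of_ne {i j : Fin N} (h : j ≠ i) (e : ℤ) :
    (Xm j e : LL N).supDegree (negExp i) = 0 := by
  rw [Xm, supDegree_single_ne_zero _ one_ne_zero, negExp, Finsupp.single_eq_of_ne h.symm]
  rfl

lemma qPochL_eq_aeval (z : LL N) (a : ℕ) : qPochL z a = aeval z (qPochPoly qq a) := by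
  simp [qPochL, qPochPoly, CK, map_prod, AddMonoidAlgebra.coe_algebraMap, mul_comm]

lemma CT_mul_qPochL_mul (G z H : LL N) {a M : ℕ} (hM : a < M) :
    CT (G * (qPochL z a * H)) =
      ∑ k ∈ range M, (qPochPoly qq a).coeff k * CT (G * z ^ k * H) := by
  rw [qPochL_eq_aeval, aeval_eq_sum_range' ((natDegree_qPochPoly_le qq a).trans_lt hM)]
  simp [CT, mul_sum, sum_mul, AddMonoidAlgebra.coeff_sum, Finset.sum_apply', mul_assoc]

/- Expanding the first factor `(z_j; q)_a = ∑_k c_k(q^a) z_j^k` lowers the bound on `G` by `k`;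
the terms with `k > d` vanish, and each `c_k(q^a)` is a polynomial of degree `k` in `q^a`. -/
theorem isPolyInPow_CT_mul_prod_qPochL {ι : Type*} (i : Fin N) (z : ι → LL N) (s : Finset ι)
    (hz : ∀ j ∈ s, (z j).supDegree (negExp i) ≤ (-1 : ℤ)) (G : LL N) (d : ℤ)
    (hG : G.supDegree (negExp i) ≤ d) :
    IsPolyInPow qq d fun a => CT (G * ∏ j ∈ s, qPochL (z j) a) := by
  classical
  induction s using Finset.induction_on generalizing G d with
  | empty =>
    simp only [prod_empty, mul_one]
    rcases lt_or_ge d 0 with hd | hd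
    · have hG0 : CT G = 0 :=
        CT_eq_zero_of_supDegree_negExp_neg (hG.trans_lt (by exact_mod_cast hd))
      simpa [hG0] using isPolyInPow_zero (q := qq) d
    · exact isPolyInPow_const _ hd
  | insert j s hjs ih =>
    have hterm (k : ℕ) :
        IsPolyInPow qq (d - k) fun a => CT (G * z j ^ k * ∏ l ∈ s, qPochL (z l) a) := by
      refine ih (fun l hl => hz l (mem_insert_of_mem hl)) _ _ ?_
      refine (supDegree_negExp_mul_le i _ _).trans ?_
      have := add_le_add hG (supDegree_negExp_pow_le (hz j (mem_insert_self j s)) k)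
      exact this.trans_eq (by rw [← WithBot.coe_add, mul_neg_one, ← sub_eq_add_neg])
    have hexpand : (fun a => CT (G * ∏ l ∈ insert j s, qPochL (z l) a)) = fun a =>
        ∑ k ∈ range (d.toNat + 1),
          (qPochPoly qq a).coeff k * CT (G * z j ^ k * ∏ l ∈ s, qPochL (z l) a) := by
      funext a
      rw [prod_insert hjs, CT_mul_qPochL_mul (M := a + d.toNat + 1) _ _ _ (by omega)]
      refine (sum_subset (range_subset_range.2 (by omega)) fun k _ hk => ?_).symm
      rw [(hterm k).apply_eq_zero (by simp only [mem_range, not_lt] at hk; omega) a, mul_zero]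
    rw [hexpand]
    refine isPolyInPow_sum _ fun k _ => ?_
    have hk := (isPolyInPow_coeff_qPochPoly qq_ne_zero qq_pow_succ_ne_one k).mul (hterm k)
    rwa [add_sub_cancel] at hk

end Laurent

section Dyson

open AddMonoidAlgebra

def embedTailHom (n : ℕ) : AddMonoidAlgebra KK (Fin n →₀ ℤ) →+* LL (n + 1) :=
  mapDomainRingHom KK (Finsupp.mapDomain.addMonoidHom Fin.succ)

variable {n : ℕ}

lemma embedTail_eq (f : AddMonoidAlgebra KK (Fin n →₀ ℤ)) :
    embedTail n f = embedTailHom n f :=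
  rfl

lemma embedTailHom_Xm (i : Fin n) (e : ℤ) : embedTailHom n (Xm i e) = Xm i.succ e := by
  simp [embedTailHom, Xm, Finsupp.mapDomain_single]

lemma embedTailHom_CK (c : KK) : embedTailHom n (CK c) = CK c := by
  simp [embedTailHom, CK]

lemma embedTailHom_qPochL (z : AddMonoidAlgebra KK (Fin n →₀ ℤ)) (k : ℕ) :
    embedTailHom n (qPochL z k) = qPochL (embedTailHom n z) k := by
  simp [qPochL, map_prod, embedTailHom_CK]

lemma supDegree_negExp_embedTail_le (f : AddMonoidAlgebra KK (Fin n →₀ ℤ)) :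
    (embedTail n f).supDegree (negExp 0) ≤ 0 := by
  refine Finset.sup_le fun ν hν => ?_
  obtain ⟨μ, -, rfl⟩ := Finset.mem_image.1 (Finsupp.mapDomain_support hν)
  rw [negExp, Finsupp.mapDomain_of_notMem_range _ _ fun ⟨i, hi⟩ => Fin.succ_ne_zero i hi]
  rfl

def dysonFactor {N : ℕ} (a : Fin N → ℕ) (i j : Fin N) : LL N :=
  qPochL (Xm i 1 * Xm j (-1)) (a i) * qPochL (CK qq * Xm j 1 * Xm i (-1)) (a j)

lemma dysonProd_eq_prod_prod {N : ℕ} (a : Fin N → ℕ) :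
    dysonProd a = ∏ i, ∏ j, if i < j then dysonFactor a i j else 1 := by
  rw [dysonProd, prod_filter, Fintype.prod_prod_type]
  rfl

lemma embedTailHom_dysonFactor (a0 : ℕ) (a : Fin n → ℕ) (i j : Fin n) :
    embedTailHom n (dysonFactor a i j) = dysonFactor (Fin.cons a0 a) i.succ j.succ := by
  simp [dysonFactor, embedTailHom_qPochL, embedTailHom_Xm, embedTailHom_CK]

def dysonCofactor (a : Fin n → ℕ) : LL (n + 1) :=
  (∏ j : Fin n, qPochL (CK qq * Xm j.succ 1 * Xm 0 (-1)) (a j)) * embedTail n (dysonProd a)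

lemma dysonProd_cons (a0 : ℕ) (a : Fin n → ℕ) :
    dysonProd (Fin.cons a0 a) =
      (∏ j : Fin n, qPochL (Xm 0 1 * Xm j.succ (-1)) a0) * dysonCofactor a := by
  rw [dysonCofactor, dysonProd_eq_prod_prod, dysonProd_eq_prod_prod, Fin.prod_univ_succ]
  simp only [Fin.prod_univ_succ, lt_self_iff_false, Fin.succ_pos, Fin.succ_lt_succ_iff,
    Fin.not_lt_zero, if_true, if_false, one_mul, embedTail_eq, map_prod, apply_ite, map_one,
    embedTailHom_dysonFactor a0]
  simp only [dysonFactor, Fin.cons_zero, Fin.cons_succ, prod_mul_distrib, mul_assoc]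

lemma supDegree_negExp_dysonCofactor_le (a : Fin n → ℕ) :
    (dysonCofactor a).supDegree (negExp 0) ≤ ((∑ j, (a j : ℤ) : ℤ) : WithBot ℤ) := by
  have hstep (j : Fin n) : (CK qq * Xm j.succ 1 * Xm (0 : Fin (n + 1)) (-1)).supDegree
      (negExp 0) ≤ ((1 : ℤ) : WithBot ℤ) := by
    refine (supDegree_negExp_mul_le 0 _ _).trans ?_
    refine (add_le_add (supDegree_negExp_mul_le 0 _ _) le_rfl).trans ?_
    rw [supDegree_negExp_Xm_self, supDegree_negExp_Xm_of_ne (Fin.succ_ne_zero j), neg_neg,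
      add_zero]
    exact (add_le_add (supDegree_negExp_CK_le _ qq) le_rfl).trans_eq (zero_add _)
  have hprod : (∏ j, qPochL (CK qq * Xm j.succ 1 * Xm (0 : Fin (n + 1)) (-1)) (a j)).supDegree
      (negExp 0) ≤ ((∑ j, (a j : ℤ) : ℤ) : WithBot ℤ) := by
    refine (supDegree_prod_le (negExp_zero 0) (negExp_add 0)).trans ?_
    rw [WithBot.coe_sum]
    exact sum_le_sum fun j _ => by
      simpa using supDegree_negExp_qPochL_le (hstep j) zero_le_one (a j)
  refine (supDegree_negExp_mul_le 0 _ _).trans ?_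
  simpa using add_le_add hprod (supDegree_negExp_embedTail_le (dysonProd a))

end Dyson

theorem isPolyInPow_CT_dysonProd_cons (n : ℕ) (L : AddMonoidAlgebra KK (Fin n →₀ ℤ))
    (a : Fin n → ℕ) (t : ℤ) :
    IsPolyInPow qq ((∑ i, (a i : ℤ)) - t) fun a0 =>
      CT (Xm (0 : Fin (n + 1)) t * embedTail n L * dysonProd (Fin.cons a0 a)) := by
  have hdown (j : Fin n) : (Xm (0 : Fin (n + 1)) 1 * Xm j.succ (-1)).supDegree (negExp 0) ≤
      ((-1 : ℤ) : WithBot ℤ) := by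
    refine (supDegree_negExp_mul_le 0 _ _).trans_eq ?_
    rw [supDegree_negExp_Xm_self, supDegree_negExp_Xm_of_ne (Fin.succ_ne_zero j), add_zero]
  set G := Xm (0 : Fin (n + 1)) t * embedTail n L * dysonCofactor a
  have hG : G.supDegree (negExp 0) ≤ (((∑ i, (a i : ℤ)) - t : ℤ) : WithBot ℤ) := by
    refine (supDegree_negExp_mul_le 0 _ _).trans <| (add_le_add
      ((supDegree_negExp_mul_le 0 _ _).trans
        (add_le_add (supDegree_negExp_Xm_self 0 t).le (supDegree_negExp_embedTail_le L)))
      (supDegree_negExp_dysonCofactor_le a)).trans_eq ?_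
    rw [add_zero, add_comm, ← WithBot.coe_add, ← sub_eq_add_neg]
  convert isPolyInPow_CT_mul_prod_qPochL 0 _ univ (fun j _ => hdown j) G _ hG using 3 with a0
  rw [dysonProd_cons]
  ring

theorem ct_polynomiality_general (n : ℕ) (Lp : AddMonoidAlgebra KK (Fin n →₀ ℤ))
    (atail : Fin n → ℕ) (t : ℤ) :
    (t ≤ (∑ i, (atail i : ℤ)) →
      ∃ P : Polynomial KK, (P.natDegree : ℤ) ≤ (∑ i, (atail i : ℤ)) - t ∧
        ∀ a0 : ℕ,
          CT (Xm (0 : Fin (n+1)) t * embedTail n Lp * dysonProd (Fin.cons a0 atail)) =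
            P.eval (qq ^ a0)) ∧
    ((∑ i, (atail i : ℤ)) < t →
      ∀ a0 : ℕ,
        CT (Xm (0 : Fin (n+1)) t * embedTail n Lp * dysonProd (Fin.cons a0 atail)) = 0) := by
  have hpoly := isPolyInPow_CT_dysonProd_cons n Lp atail t
  refine ⟨fun ht => ?_, fun ht => hpoly.apply_eq_zero (by omega)⟩
  obtain ⟨P, rfl | hP, hCT⟩ := hpoly
  · exact ⟨0, by simpa using ht, hCT⟩
  · exact ⟨P, hP, hCT⟩

/-- **Lemma 5.2 (Lu–Xin–Zhou).** For a Laurent polynomial `L` in `x_1,…,x_n`, fixed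
non-negative integers `a_1,…,a_n` and an integer `t ≤ a_1+⋯+a_n`, the constant term
`CT x_0^t L ∏_{0≤i<j≤n}(x_i/x_j;q)_{a_i}(q x_j/x_i;q)_{a_j}` is a polynomial in
`q^{a_0}` of degree at most `a_1+⋯+a_n-t`; it vanishes when `t > a_1+⋯+a_n`. -/
theorem ct_polynomiality (n : ℕ) (hn : 1 ≤ n) (Lp : AddMonoidAlgebra KK (Fin n →₀ ℤ))
    (atail : Fin n → ℕ) (t : ℤ) :
    (t ≤ (∑ i, (atail i : ℤ)) →
      ∃ P : Polynomial KK, (P.natDegree : ℤ) ≤ (∑ i, (atail i : ℤ)) - t ∧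
        ∀ a0 : ℕ,
          CT (Xm (0 : Fin (n+1)) t * embedTail n Lp * dysonProd (Fin.cons a0 atail)) =
            P.eval (qq ^ a0)) ∧
    ((∑ i, (atail i : ℤ)) < t →
      ∀ a0 : ℕ,
        CT (Xm (0 : Fin (n+1)) t * embedTail n Lp * dysonProd (Fin.cons a0 atail)) = 0) :=
  ct_polynomiality_general n Lp atail t

end
end

section
/- For s a positive integer, let (b_1,…,b_{s+1}) and (k_1,…,k_s) be compositions of non-negative integers such that 1 ≤ k_i ≤ b_1+⋯+b_{s+1} for all 1 ≤ i ≤ s. Then at least one of the following holds: (1) 1 ≤ k_i ≤ b_i for some i with 1 ≤ i ≤ s; (2) −b_j ≤ k_i − k_j ≤ b_i − 1 for some 1 ≤ i < j ≤ s; (3) there exists a permutation w of {1,…,s} and non-negative integers t_1,…,t_s such that, setting w(0) := 0 and k_0 := 0, one has k_{w(j)} − k_{w(j−1)} = b_{w(j)} + t_j for all 1 ≤ j ≤ s, t_1+⋯+t_s ≤ b_{s+1}, and t_j > 0 whenever w(j−1) < w(j) for 1 ≤ j ≤ s. -/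
/-!
If (1) and (2) both fail, then `b_i < k_i` for every `i`, and for `i < j` either
`k_i + b_j < k_j` or `k_j + b_i ≤ k_i`. List the indices by increasing `k`, breaking ties by
decreasing index. For consecutive entries `p, q` of this list the dichotomy gives
`k_p + b_q ≤ k_q`, strictly when `p < q`; so the gaps `t_j` are well defined and positive at
ascents of `w`. Telescoping, `k_{w(s)} = b_1 + ⋯ + b_s + t_1 + ⋯ + t_s`, and
`k_{w(s)} ≤ b_1 + ⋯ + b_{s+1}` bounds the total gap by `b_{s+1}`.
-/

open Finset

theorem exists_bijOn_Icc_chain (R : ℕ → ℕ → Prop) [DecidableRel R] [IsTrans ℕ R]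
    [Std.Antisymm R] [Std.Total R] (n : ℕ) :
    ∃ w : ℕ → ℕ, w 0 = 0 ∧ Set.BijOn w (Set.Icc 1 n) (Set.Icc 1 n) ∧
      ∀ j, 2 ≤ j → j ≤ n → R (w (j - 1)) (w j) := by
  set l := (Icc 1 n).sort R
  have hlen : l.length = n := by simp [l]
  have hmem : ∀ a, a ∈ l ↔ a ∈ Set.Icc 1 n := by simp [l]
  have hnodup : l.Nodup := sort_nodup _ _
  have hsorted : l.Pairwise R := pairwise_sort _ _
  clear_value l
  have hw : ∀ j (h : j - 1 < l.length), 1 ≤ j → (0 :: l).getD j 0 = l[j - 1] := by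
    intro j h hj
    obtain ⟨i, rfl⟩ := Nat.exists_eq_add_of_le' hj
    simp [List.getElem?_eq_getElem (by simpa using h)]
  refine ⟨fun j => (0 :: l).getD j 0, rfl, ⟨?_, ?_, ?_⟩, ?_⟩
  · rintro j ⟨hj, hjn⟩
    simp only [hw j (by omega) hj, ← hmem]
    exact List.getElem_mem _
  · rintro i ⟨hi, hin⟩ j ⟨hj, hjn⟩ hij
    simp only [hw i (by omega) hi, hw j (by omega) hj] at hij
    have := hnodup.getElem_inj_iff.1 hij
    omega
  · intro a ha
    obtain ⟨i, hi, rfl⟩ := List.mem_iff_getElem.1 ((hmem a).2 ha)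
    exact ⟨i + 1, ⟨by omega, by omega⟩, hw (i + 1) (by simpa using hi) (by omega)⟩
  · intro j hj hjn
    simp only [hw j (by omega) (by omega), hw (j - 1) (by omega) (by omega)]
    exact hsorted.rel_get_of_lt (a := ⟨j - 1 - 1, by omega⟩) (b := ⟨j - 1, by omega⟩)
      (by simp only [Fin.mk_lt_mk]; omega)

theorem add_sum_Icc_eq_of_forall_eq_add {M : Type*} [AddCommMonoid M] (f g : ℕ → M) (n : ℕ)
    (h : ∀ j, 1 ≤ j → j ≤ n → f j = f (j - 1) + g j) :
    f 0 + ∑ j ∈ Icc 1 n, g j = f n := by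
  induction n with
  | zero => simp
  | succ n ih =>
    rw [sum_Icc_succ_top (by omega), ← add_assoc, ih fun j hj hjn => h j hj (by omega),
      h (n + 1) (by omega) le_rfl, Nat.add_sub_cancel]

/-- The convention `k_0 = 0` of the statement. -/
def zeroExtend (k : ℕ → ℕ) (i : ℕ) : ℕ := if i = 0 then 0 else k i

/-- Increasing `k`, ties broken by decreasing index, so that an ascent `w (j - 1) < w j`
of the enumeration is a strict increase of `k`. -/
def TieBreakLE (k : ℕ → ℕ) (i j : ℕ) : Prop := k i < k j ∨ (k i = k j ∧ j ≤ i)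

instance (k : ℕ → ℕ) : DecidableRel (TieBreakLE k) :=
  fun _ _ => inferInstanceAs (Decidable (_ ∨ _))

instance (k : ℕ → ℕ) : IsTrans ℕ (TieBreakLE k) :=
  ⟨fun _ _ _ => by unfold TieBreakLE; omega⟩

instance (k : ℕ → ℕ) : Std.Antisymm (TieBreakLE k) :=
  ⟨fun _ _ => by unfold TieBreakLE; omega⟩

instance (k : ℕ → ℕ) : Std.Total (TieBreakLE k) :=
  ⟨fun _ _ => by unfold TieBreakLE; omega⟩

theorem add_le_of_tieBreakLE {s : ℕ} {b k : ℕ → ℕ}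
    (hsep : ∀ i j, 1 ≤ i → i < j → j ≤ s → k i + b j < k j ∨ k j + b i ≤ k i)
    {p q : ℕ} (hp : p ∈ Set.Icc 1 s) (hq : q ∈ Set.Icc 1 s) (hpq : p ≠ q)
    (h : TieBreakLE k p q) : k p + b q ≤ k q ∧ (p < q → k p + b q < k q) := by
  obtain ⟨hp1, hps⟩ := hp
  obtain ⟨hq1, hqs⟩ := hq
  unfold TieBreakLE at h
  rcases Nat.lt_or_gt_of_ne hpq with hlt | hgt
  · have := hsep p q hp1 hlt hqs
    omega
  · have := hsep q p hq1 hgt hps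
    omega

theorem exists_bijOn_Icc_add_le {s : ℕ} {b k : ℕ → ℕ}
    (hsep : ∀ i j, 1 ≤ i → i < j → j ≤ s → k i + b j < k j ∨ k j + b i ≤ k i)
    (hbk : ∀ i, 1 ≤ i → i ≤ s → b i < k i) :
    ∃ w : ℕ → ℕ, w 0 = 0 ∧ Set.BijOn w (Set.Icc 1 s) (Set.Icc 1 s) ∧
      ∀ j, 1 ≤ j → j ≤ s → zeroExtend k (w (j - 1)) + b (w j) ≤ k (w j) ∧
        (w (j - 1) < w j → zeroExtend k (w (j - 1)) + b (w j) < k (w j)) := by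
  obtain ⟨w, hw0, hw, hchain⟩ := exists_bijOn_Icc_chain (TieBreakLE k) s
  refine ⟨w, hw0, hw, fun j hj hjs => ?_⟩
  obtain rfl | hj2 := eq_or_lt_of_le hj
  · have := hbk (w 1) (hw.mapsTo ⟨hj, hjs⟩).1 (hw.mapsTo ⟨hj, hjs⟩).2
    simp only [Nat.sub_self, zeroExtend, hw0, if_pos]
    omega
  have hprev := hw.mapsTo (show j - 1 ∈ Set.Icc 1 s from ⟨by omega, by omega⟩)
  rw [zeroExtend, if_neg (by have := hprev.1; omega)]
  refine add_le_of_tieBreakLE hsep hprev (hw.mapsTo ⟨hj, hjs⟩) (fun h => ?_) (hchain j hj2 hjs)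
  have := hw.injOn ⟨by omega, by omega⟩ ⟨hj, hjs⟩ h
  omega

theorem sum_le_of_forall_zeroExtend_eq {s : ℕ} {b k w t : ℕ → ℕ} (hw0 : w 0 = 0)
    (hw : Set.BijOn w (Set.Icc 1 s) (Set.Icc 1 s))
    (hk : ∀ i, 1 ≤ i → i ≤ s → k i ≤ ∑ j ∈ Icc 1 (s + 1), b j)
    (h : ∀ j, 1 ≤ j → j ≤ s →
      zeroExtend k (w j) = zeroExtend k (w (j - 1)) + b (w j) + t j) :
    ∑ j ∈ Icc 1 s, t j ≤ b (s + 1) := by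
  have htelescope := add_sum_Icc_eq_of_forall_eq_add (fun j => zeroExtend k (w j))
    (fun j => b (w j) + t j) s fun j hj hjs => (h j hj hjs).trans (add_assoc _ _ _)
  have hbw : ∑ j ∈ Icc 1 s, b (w j) = ∑ i ∈ Icc 1 s, b i := by
    rw [← coe_Icc] at hw
    exact sum_nbij w (fun _ ha => hw.mapsTo ha) hw.injOn hw.surjOn fun _ _ => rfl
  have hlast : zeroExtend k (w s) ≤ ∑ i ∈ Icc 1 s, b i + b (s + 1) := by
    rw [← sum_Icc_succ_top (by omega), zeroExtend]
    split_ifs with hws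
    · exact Nat.zero_le _
    · have hs : 1 ≤ s := Nat.one_le_iff_ne_zero.2 fun hs => hws (by subst hs; exact hw0)
      exact hk _ (hw.mapsTo ⟨hs, le_rfl⟩).1 (hw.mapsTo ⟨hs, le_rfl⟩).2
  have hfirst : zeroExtend k (w 0) = 0 := if_pos hw0
  simp only [hfirst, zero_add, sum_add_distrib, hbw] at htelescope
  omega

theorem tournament_lemma_general (s : ℕ) (b k : ℕ → ℕ)
    (hk : ∀ i, 1 ≤ i → i ≤ s → 1 ≤ k i ∧ k i ≤ ∑ j ∈ Finset.Icc 1 (s+1), b j) :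
    (∃ i, 1 ≤ i ∧ i ≤ s ∧ 1 ≤ k i ∧ k i ≤ b i) ∨
    (∃ i j, 1 ≤ i ∧ i < j ∧ j ≤ s ∧
      -(b j : ℤ) ≤ (k i : ℤ) - (k j : ℤ) ∧ (k i : ℤ) - (k j : ℤ) ≤ (b i : ℤ) - 1) ∨
    (∃ w t : ℕ → ℕ, w 0 = 0 ∧ Set.BijOn w (Set.Icc 1 s) (Set.Icc 1 s) ∧
      (∀ j, 1 ≤ j → j ≤ s →
        (if w j = 0 then 0 else k (w j)) =
          (if w (j-1) = 0 then 0 else k (w (j-1))) + b (w j) + t j) ∧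
      (∑ j ∈ Finset.Icc 1 s, t j) ≤ b (s+1) ∧
      (∀ j, 1 ≤ j → j ≤ s → w (j-1) < w j → 0 < t j)) := by
  refine or_iff_not_imp_left.2 fun h1 => or_iff_not_imp_left.2 fun h2 => ?_
  push Not at h1 h2
  obtain ⟨w, hw0, hw, hstep⟩ := exists_bijOn_Icc_add_le
    (fun i j hi hij hjs => by have := h2 i j hi hij hjs; omega)
    (fun i hi his => h1 i hi his (hk i hi his).1)
  have hwk : ∀ j, 1 ≤ j → j ≤ s → zeroExtend k (w j) = k (w j) := fun j hj hjs =>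
    if_neg (Nat.one_le_iff_ne_zero.1 (hw.mapsTo ⟨hj, hjs⟩).1)
  set t : ℕ → ℕ := fun j => k (w j) - zeroExtend k (w (j - 1)) - b (w j) with ht
  have hgap : ∀ j, 1 ≤ j → j ≤ s →
      zeroExtend k (w j) = zeroExtend k (w (j - 1)) + b (w j) + t j := fun j hj hjs => by
    have := (hstep j hj hjs).1
    rw [hwk j hj hjs]
    simp only [ht]
    omega
  refine ⟨w, t, hw0, hw, hgap, sum_le_of_forall_zeroExtend_eq hw0 hw
    (fun i hi his => (hk i hi his).2) hgap, fun j hj hjs hlt => ?_⟩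
  have := (hstep j hj hjs).2 hlt
  simp only [ht]
  omega

/-- **Lemma 5.4.** For `s ≥ 1` and compositions `(b_1,…,b_{s+1})`, `(k_1,…,k_s)` with
`1 ≤ k_i ≤ b_1+⋯+b_{s+1}` for all `1 ≤ i ≤ s`, at least one of the following holds:
(1) `1 ≤ k_i ≤ b_i` for some `i`;
(2) `-b_j ≤ k_i - k_j ≤ b_i - 1` for some `i < j`;
(3) there is a bijection `w` of `{1,…,s}` (with the convention `w(0) = 0`, `k_0 = 0`)
and non-negative integers `t_1,…,t_s` with `k_{w(j)} = k_{w(j-1)} + b_{w(j)} + t_j` for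
`1 ≤ j ≤ s`, `t_1+⋯+t_s ≤ b_{s+1}`, and `t_j > 0` whenever `w(j-1) < w(j)`. -/
theorem tournament_lemma (s : ℕ) (hs : 1 ≤ s) (b k : ℕ → ℕ)
    (hk : ∀ i, 1 ≤ i → i ≤ s → 1 ≤ k i ∧ k i ≤ ∑ j ∈ Finset.Icc 1 (s+1), b j) :
    (∃ i, 1 ≤ i ∧ i ≤ s ∧ 1 ≤ k i ∧ k i ≤ b i) ∨
    (∃ i j, 1 ≤ i ∧ i < j ∧ j ≤ s ∧
      -(b j : ℤ) ≤ (k i : ℤ) - (k j : ℤ) ∧ (k i : ℤ) - (k j : ℤ) ≤ (b i : ℤ) - 1) ∨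
    (∃ w t : ℕ → ℕ, w 0 = 0 ∧ Set.BijOn w (Set.Icc 1 s) (Set.Icc 1 s) ∧
      (∀ j, 1 ≤ j → j ≤ s →
        (if w j = 0 then 0 else k (w j)) =
          (if w (j-1) = 0 then 0 else k (w (j-1))) + b (w j) + t j) ∧
      (∑ j ∈ Finset.Icc 1 s, t j) ≤ b (s+1) ∧
      (∀ j, 1 ≤ j → j ≤ s → w (j-1) < w j → 0 < t j)) :=
  tournament_lemma_general s b k hk
end
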